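/- arXiv:math/0405281 — 4 statements merged into one kernel-verified Lean document; each statement's English description precedes it below -/
import Mathlib

section
/- In any monotone-separable network, the variables X and Z are internally monotone: for every arrival process N, every mark sequence, and all integers m ≤ n, one has X_{[m-1,n]}(N) ≥ X_{[m,n]}(N) and Z_{[m-1,n]}(N) ≥ Z_{[m,n]}(N). In particular, the sequence n ↦ Z_{[-n,0]}(N) is nondecreasing. -/
open MeasureTheory Filter Set

/-- A monotone-separable network: `X m n T ζ` is the time of last activity for the
`[m,n]` restriction of the arrival process `T` with marks `ζ`.  `X m n` only depends on
the coordinates `T l, ζ l` for `m ≤ l ≤ n`, and satisfies causality, external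
monotonicity, homogeneity and separability. -/
structure MonSepNet (K : Type*) where
  X : ℤ → ℤ → (ℤ → ℝ) → (ℤ → K) → ℝ
  localDep : ∀ (m n : ℤ) (T T' : ℤ → ℝ) (ζ ζ' : ℤ → K),
      (∀ l, m ≤ l → l ≤ n → T l = T' l) → (∀ l, m ≤ l → l ≤ n → ζ l = ζ' l) →
      X m n T ζ = X m n T' ζ'
  causality : ∀ (m n : ℤ) (T : ℤ → ℝ) (ζ : ℤ → K), m ≤ n → Monotone T →
      T n ≤ X m n T ζ
  extMono : ∀ (m n : ℤ) (T T' : ℤ → ℝ) (ζ : ℤ → K), m ≤ n → Monotone T → Monotone T' →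
      (∀ l, T l ≤ T' l) → X m n T ζ ≤ X m n T' ζ
  homogeneity : ∀ (m n : ℤ) (T : ℤ → ℝ) (ζ : ℤ → K) (c : ℝ), m ≤ n → Monotone T →
      X m n (fun l => T l + c) ζ = X m n T ζ + c
  separability : ∀ (m l n : ℤ) (T : ℤ → ℝ) (ζ : ℤ → K), m ≤ l → l < n → Monotone T →
      X m l T ζ ≤ T (l + 1) → X m n T ζ = X (l + 1) n T ζ

/-- The `[m,n]` maximal dater `Z_{[m,n]}(N) = X_{[m,n]}(N) - T_n`. -/
noncomputable def MonSepNet.Z {K : Type*} (net : MonSepNet K)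
    (m n : ℤ) (T : ℤ → ℝ) (ζ : ℤ → K) : ℝ :=
  net.X m n T ζ - T n

/-!
Advancing all arrivals before `m` by a large enough constant `C` makes customer `m - 1`
leave before customer `m` arrives. For the advanced process `T'`, separability gives
`X_{[m-1,n]}(T') = X_{[m,n]}(T') = X_{[m,n]}(T)`, while external monotonicity gives
`X_{[m-1,n]}(T') ≤ X_{[m-1,n]}(T)`.
-/

def advanceBefore (m : ℤ) (C : ℝ) (T : ℤ → ℝ) (l : ℤ) : ℝ :=
  if l < m then T l - C else T l

section advanceBefore

variable {m l : ℤ} {C : ℝ} {T : ℤ → ℝ}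

theorem advanceBefore_of_lt (h : l < m) : advanceBefore m C T l = T l - C := if_pos h

theorem advanceBefore_of_le (h : m ≤ l) : advanceBefore m C T l = T l :=
  if_neg (not_lt.2 h)

theorem advanceBefore_le (hC : 0 ≤ C) (l : ℤ) : advanceBefore m C T l ≤ T l := by
  unfold advanceBefore
  split_ifs <;> linarith

theorem Monotone.advanceBefore (hT : Monotone T) (hC : 0 ≤ C) :
    Monotone (advanceBefore m C T) := by
  intro a b hab
  have hTab := hT hab
  unfold _root_.advanceBefore
  split_ifs <;> linarith

end advanceBefore

namespace MonSepNet

variable {K : Type*} (net : MonSepNet K) {T : ℤ → ℝ} (ζ : ℤ → K)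

theorem X_eq_sub_of_eqOn {m n : ℤ} (hmn : m ≤ n) (hT : Monotone T) {T' : ℤ → ℝ} (C : ℝ)
    (hT' : ∀ l, m ≤ l → l ≤ n → T' l = T l - C) :
    net.X m n T' ζ = net.X m n T ζ - C := by
  rw [net.localDep m n T' (fun l => T l + -C) ζ ζ (fun l h₁ h₂ => by rw [hT' l h₁ h₂]; ring)
    (fun _ _ _ => rfl), net.homogeneity m n T ζ (-C) hmn hT, sub_eq_add_neg]

theorem X_le_X_sub_one (hT : Monotone T) {m n : ℤ} (hmn : m ≤ n) :
    net.X m n T ζ ≤ net.X (m - 1) n T ζ := by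
  set C := max 0 (net.X (m - 1) (m - 1) T ζ - T m)
  have hC : 0 ≤ C := le_max_left _ _
  set T' := advanceBefore m C T
  have hT' : Monotone T' := hT.advanceBefore hC
  have hsingle : net.X (m - 1) (m - 1) T' ζ = net.X (m - 1) (m - 1) T ζ - C :=
    net.X_eq_sub_of_eqOn ζ le_rfl hT C fun l _ h => advanceBefore_of_lt (by omega)
  have hleaves : net.X (m - 1) (m - 1) T' ζ ≤ T' (m - 1 + 1) := by
    rw [hsingle, sub_add_cancel, show T' m = T m from advanceBefore_of_le le_rfl]
    linarith [le_max_right 0 (net.X (m - 1) (m - 1) T ζ - T m)]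
  have hsep : net.X (m - 1) n T' ζ = net.X m n T ζ := by
    rw [net.separability (m - 1) (m - 1) n T' ζ le_rfl (by omega) hT' hleaves, sub_add_cancel]
    exact net.localDep m n T' T ζ ζ (fun l h _ => advanceBefore_of_le h) fun _ _ _ => rfl
  calc net.X m n T ζ = net.X (m - 1) n T' ζ := hsep.symm
    _ ≤ net.X (m - 1) n T ζ := net.extMono _ _ T' T ζ (by omega) hT' hT (advanceBefore_le hC)

theorem Z_le_Z_sub_one (hT : Monotone T) {m n : ℤ} (hmn : m ≤ n) :
    net.Z m n T ζ ≤ net.Z (m - 1) n T ζ :=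
  sub_le_sub_right (net.X_le_X_sub_one ζ hT hmn) _

theorem monotone_Z_neg (hT : Monotone T) : Monotone fun n : ℕ => net.Z (-(n : ℤ)) 0 T ζ := by
  refine monotone_nat_of_le_succ fun n => ?_
  have hn : -((n + 1 : ℕ) : ℤ) = -(n : ℤ) - 1 := by push_cast; ring
  simpa only [hn] using net.Z_le_Z_sub_one ζ hT (by omega : -(n : ℤ) ≤ 0)

end MonSepNet

/-- **Internal monotonicity of `X` and `Z`** (Lemma 1): for every arrival process,
every mark sequence and all `m ≤ n`, `X_{[m-1,n]} ≥ X_{[m,n]}` and `Z_{[m-1,n]} ≥ Z_{[m,n]}`;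
in particular `n ↦ Z_{[-n,0]}` is nondecreasing. -/
theorem internal_monotonicity {K : Type*} (net : MonSepNet K)
    (T : ℤ → ℝ) (hT : Monotone T) (ζ : ℤ → K) :
    (∀ m n : ℤ, m ≤ n →
      net.X m n T ζ ≤ net.X (m - 1) n T ζ ∧ net.Z m n T ζ ≤ net.Z (m - 1) n T ζ) ∧
    Monotone (fun n : ℕ => net.Z (-(n : ℤ)) 0 T ζ) :=
  ⟨fun _ _ hmn => ⟨net.X_le_X_sub_one ζ hT hmn, net.Z_le_Z_sub_one ζ hT hmn⟩,
    net.monotone_Z_neg ζ hT⟩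
end

section
/- In any monotone-separable network, the maximal daters are subadditive: for every arrival process N, every mark sequence, and all integers m ≤ l < n, one has Z_{[m,n]}(N) ≤ Z_{[m,l]}(N) + Z_{[l+1,n]}(N). -/
/-!
Delay every arrival after `l` by `c = Z_{[m,l]}(N) ≥ 0`. The `[m,l]` block is unaffected and now
finishes at `T_l + c ≤ T_{l+1} + c`, i.e. before the first delayed arrival, so by separability the
whole `[m,n]` network on the delayed process behaves like the `[l+1,n]` network shifted by `c`.
External monotonicity compares this with the undelayed process, giving
`X_{[m,n]}(N) ≤ X_{[l+1,n]}(N) + Z_{[m,l]}(N)`.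
-/

open MeasureTheory Filter Set

def delayAfter (T : ℤ → ℝ) (l : ℤ) (c : ℝ) (k : ℤ) : ℝ :=
  if k ≤ l then T k else T k + c

section delayAfter

variable {T : ℤ → ℝ} {l : ℤ} {c : ℝ}

lemma delayAfter_of_le {k : ℤ} (hk : k ≤ l) : delayAfter T l c k = T k :=
  if_pos hk

lemma delayAfter_of_lt {k : ℤ} (hk : l < k) : delayAfter T l c k = T k + c :=
  if_neg (not_le.mpr hk)

lemma le_delayAfter (hc : 0 ≤ c) (k : ℤ) : T k ≤ delayAfter T l c k := by
  unfold delayAfter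
  split_ifs <;> linarith

lemma Monotone.delayAfter (hT : Monotone T) (hc : 0 ≤ c) : Monotone (delayAfter T l c) := by
  intro a b hab
  rcases le_or_gt b l with hb | hb
  · rw [delayAfter_of_le hb, delayAfter_of_le (hab.trans hb)]
    exact hT hab
  · rw [delayAfter_of_lt hb]
    rcases le_or_gt a l with ha | ha
    · rw [delayAfter_of_le ha]
      linarith [hT hab]
    · rw [delayAfter_of_lt ha]
      linarith [hT hab]

end delayAfter

namespace MonSepNet

variable {K : Type*} (net : MonSepNet K) {T : ℤ → ℝ} {ζ : ℤ → K}

lemma Z_nonneg {m n : ℤ} (hmn : m ≤ n) (hT : Monotone T) : 0 ≤ net.Z m n T ζ :=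
  sub_nonneg.mpr (net.causality m n T ζ hmn hT)

lemma X_delayAfter_of_le {m n l : ℤ} (hnl : n ≤ l) (c : ℝ) :
    net.X m n (delayAfter T l c) ζ = net.X m n T ζ :=
  net.localDep m n _ T ζ ζ (fun _ _ hk => delayAfter_of_le (hk.trans hnl)) fun _ _ _ => rfl

lemma X_delayAfter_of_lt {n l : ℤ} (hln : l < n) (hT : Monotone T) (c : ℝ) :
    net.X (l + 1) n (delayAfter T l c) ζ = net.X (l + 1) n T ζ + c := by
  rw [← net.homogeneity (l + 1) n T ζ c (by omega) hT]
  exact net.localDep (l + 1) n _ _ ζ ζ (fun _ hk _ => delayAfter_of_lt hk) fun _ _ _ => rfl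

theorem X_le_X_add_Z {m l n : ℤ} (hml : m ≤ l) (hln : l < n) (hT : Monotone T) :
    net.X m n T ζ ≤ net.X (l + 1) n T ζ + net.Z m l T ζ := by
  set c := net.Z m l T ζ
  have hc : 0 ≤ c := net.Z_nonneg hml hT
  have hT' : Monotone (delayAfter T l c) := hT.delayAfter hc
  have hblock : net.X m l (delayAfter T l c) ζ ≤ delayAfter T l c (l + 1) := by
    rw [net.X_delayAfter_of_le le_rfl, delayAfter_of_lt (lt_add_one l)]
    have hX : net.X m l T ζ = T l + c := (add_sub_cancel _ _).symm
    linarith [hT (lt_add_one l).le]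
  calc net.X m n T ζ ≤ net.X m n (delayAfter T l c) ζ :=
        net.extMono m n _ _ ζ (by omega) hT hT' (le_delayAfter hc)
    _ = net.X (l + 1) n (delayAfter T l c) ζ := net.separability m l n _ ζ hml hln hT' hblock
    _ = net.X (l + 1) n T ζ + c := net.X_delayAfter_of_lt hln hT c

end MonSepNet

/-- **Subadditivity of the maximal daters** (Lemma 2): for every arrival process `N`,
every mark sequence and all `m ≤ l < n`,
`Z_{[m,n]}(N) ≤ Z_{[m,l]}(N) + Z_{[l+1,n]}(N)`. -/
theorem subadditivity_of_maximal_daters {K : Type*} (net : MonSepNet K)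
    (T : ℤ → ℝ) (hT : Monotone T) (ζ : ℤ → K) (m l n : ℤ) (hml : m ≤ l) (hln : l < n) :
    net.Z m n T ζ ≤ net.Z m l T ζ + net.Z (l + 1) n T ζ := by
  have := net.X_le_X_add_Z (ζ := ζ) hml hln hT
  unfold MonSepNet.Z at *
  linarith
end

section
/- In any monotone-separable network, for every arrival process N with T_0 = 0 and all integers m < n ≤ 0, one has Z_{[m,0]}(N) ≤ Z_{[n,0]}(N) + max(0, Z_{[m,n−1]}(N) − τ_{n−1}), where τ_{n−1} = T_n − T_{n−1}. -/
/-!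
Delay every arrival from `l + 1` on by `c = max 0 (X_{[m,l]} - T_{l+1})`. This cannot speed up
the network, it leaves `[m,l]` untouched, and afterwards the `[m,l]` subnetwork is empty when
customer `l + 1` arrives, so by separability the delayed `[m,n]` network behaves as its
`[l+1,n]` part, which by homogeneity is the undelayed one shifted by `c`.
-/


open MeasureTheory Filter Set

def delayFrom (T : ℤ → ℝ) (k : ℤ) (c : ℝ) : ℤ → ℝ :=
  fun l => if k ≤ l then T l + c else T l

section delayFrom

variable {T : ℤ → ℝ} {k : ℤ} {c : ℝ}

lemma delayFrom_of_le {l : ℤ} (h : k ≤ l) : delayFrom T k c l = T l + c := if_pos h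

lemma delayFrom_of_lt {l : ℤ} (h : l < k) : delayFrom T k c l = T l := if_neg (not_le.2 h)

lemma le_delayFrom (hc : 0 ≤ c) (l : ℤ) : T l ≤ delayFrom T k c l := by
  unfold delayFrom
  split_ifs <;> linarith

lemma monotone_delayFrom (hT : Monotone T) (hc : 0 ≤ c) : Monotone (delayFrom T k c) := by
  intro a b hab
  unfold delayFrom
  split_ifs with ha hb hb
  · linarith [hT hab]
  · exact absurd (ha.trans hab) hb
  · linarith [hT hab]
  · exact hT hab

end delayFrom

namespace MonSepNet

variable {K : Type*} (net : MonSepNet K) {T : ℤ → ℝ} {ζ : ℤ → K} {k m n : ℤ} {c : ℝ}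

lemma X_delayFrom_of_lt (h : n < k) : net.X m n (delayFrom T k c) ζ = net.X m n T ζ :=
  net.localDep m n _ _ ζ ζ (fun _ _ hl => delayFrom_of_lt (hl.trans_lt h)) fun _ _ _ => rfl

lemma X_delayFrom_of_le (hT : Monotone T) (hkm : k ≤ m) (hmn : m ≤ n) :
    net.X m n (delayFrom T k c) ζ = net.X m n T ζ + c := by
  rw [← net.homogeneity m n T ζ c hmn hT]
  exact net.localDep m n _ _ ζ ζ (fun _ hl _ => delayFrom_of_le (hkm.trans hl)) fun _ _ _ => rfl

theorem X_le_X_add_max (hT : Monotone T) {l : ℤ} (hml : m ≤ l) (hln : l < n) :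
    net.X m n T ζ ≤ net.X (l + 1) n T ζ + max 0 (net.X m l T ζ - T (l + 1)) := by
  set c := max 0 (net.X m l T ζ - T (l + 1))
  have hc : 0 ≤ c := le_max_left _ _
  have hT' : Monotone (delayFrom T (l + 1) c) := monotone_delayFrom hT hc
  have hidle : net.X m l (delayFrom T (l + 1) c) ζ ≤ delayFrom T (l + 1) c (l + 1) := by
    rw [net.X_delayFrom_of_lt (lt_add_one l), delayFrom_of_le le_rfl]
    linarith [le_max_right 0 (net.X m l T ζ - T (l + 1))]
  calc net.X m n T ζ ≤ net.X m n (delayFrom T (l + 1) c) ζ :=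
        net.extMono m n _ _ ζ (hml.trans hln.le) hT hT' (le_delayFrom hc)
    _ = net.X (l + 1) n (delayFrom T (l + 1) c) ζ :=
        net.separability m l n _ ζ hml hln hT' hidle
    _ = net.X (l + 1) n T ζ + c := net.X_delayFrom_of_le hT le_rfl hln

end MonSepNet

theorem upper_bound_lemma_general {K : Type*} (net : MonSepNet K)
    (T : ℤ → ℝ) (hT : Monotone T) (ζ : ℤ → K)
    (m n : ℤ) (hmn : m < n) (hn : n ≤ 0) :
    net.Z m 0 T ζ ≤
      net.Z n 0 T ζ + max 0 (net.Z m (n - 1) T ζ - (T n - T (n - 1))) := by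
  have h := net.X_le_X_add_max (ζ := ζ) hT (Int.le_sub_one_of_lt hmn) (Int.sub_one_lt_of_le hn)
  rw [sub_add_cancel] at h
  simp only [MonSepNet.Z, sub_sub_sub_cancel_right]
  linarith

/-- **Lemma 5**: in any monotone-separable network, for every arrival process `N` with
`T_0 = 0` and all integers `m < n ≤ 0`,
`Z_{[m,0]}(N) ≤ Z_{[n,0]}(N) + max(0, Z_{[m,n-1]}(N) - τ_{n-1})`,
where `τ_{n-1} = T_n - T_{n-1}`. -/
theorem upper_bound_lemma {K : Type*} (net : MonSepNet K)
    (T : ℤ → ℝ) (hT : Monotone T) (hT0 : T 0 = 0) (ζ : ℤ → K)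
    (m n : ℤ) (hmn : m < n) (hn : n ≤ 0) :
    net.Z m 0 T ζ ≤
      net.Z n 0 T ζ + max 0 (net.Z m (n - 1) T ζ - (T n - T (n - 1))) :=
  upper_bound_lemma_general net T hT ζ m n hmn hn
end

section
/- Fork-join lower bound: in any monotone-separable network, suppose that for some r ≥ 1 there are nonnegative numbers Y_i^{(j)} (i ∈ ℤ, 1 ≤ j ≤ r) such that Z_{[n,0]}(Q) ≥ max_{1≤j≤r} Σ_{i=n}^{0} Y_i^{(j)} for all n ≤ 0. Then for every arrival process N with T_0 = 0, Z_{(−∞,0]}(N) ≥ max_{1≤j≤r} sup_{n≤0} ( Σ_{i=n}^{0} Y_i^{(j)} − Σ_{i=n}^{−1} τ_i ), where τ_i = T_{i+1} − T_i; that is, Z_{(−∞,0]}(N) dominates the stationary response time of the r-dimensional fork-join queue with service times Y_i^{(j)} and interarrival times τ_i. -/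
open MeasureTheory Filter Set

/-!
Comparing with the degenerate process: by homogeneity, `Q` shifted to time `T_n` is an arrival
process lying below `N` on `[n, 0]`, so external monotonicity gives
`Z_{[n,0]}(N) ≥ Z_{[n,0]}(Q) - (T_0 - T_n)`, and the hypothesis on `Q` bounds the right-hand side
by the fork-join quantity.
-/

namespace MonSepNet

variable {K : Type*} (net : MonSepNet K)

theorem X_zero_add_le {m n : ℤ} (hmn : m ≤ n) {T : ℤ → ℝ} (hT : Monotone T) (ζ : ℤ → K) :
    net.X m n (fun _ => 0) ζ + T m ≤ net.X m n T ζ := by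
  -- `max T (T m)` agrees with `T` on `[m, n]` and dominates the constant `T m` everywhere.
  have hmax : Monotone fun l => max (T l) (T m) := hT.max monotone_const
  calc net.X m n (fun _ => 0) ζ + T m = net.X m n (fun _ => 0 + T m) ζ :=
        (net.homogeneity m n _ ζ (T m) hmn monotone_const).symm
    _ ≤ net.X m n (fun l => max (T l) (T m)) ζ :=
        net.extMono m n _ _ ζ hmn monotone_const hmax fun _ => by simp
    _ = net.X m n T ζ :=
        net.localDep m n _ T ζ ζ (fun _ hl _ => max_eq_left (hT hl)) fun _ _ _ => rfl

theorem Z_zero_sub_le {m n : ℤ} (hmn : m ≤ n) {T : ℤ → ℝ} (hT : Monotone T) (ζ : ℤ → K) :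
    net.Z m n (fun _ => 0) ζ - (T n - T m) ≤ net.Z m n T ζ := by
  have := net.X_zero_add_le hmn hT ζ
  simp only [Z]
  linarith

theorem Z_le_iSup_Z {n : ℤ} (hn : n ≤ 0) (T : ℤ → ℝ) (ζ : ℤ → K) :
    ((net.Z n 0 T ζ : ℝ) : EReal) ≤ ⨆ k : ℕ, ((net.Z (-(k : ℤ)) 0 T ζ : ℝ) : EReal) := by
  have hk : -(((-n).toNat : ℕ) : ℤ) = n := by omega
  exact le_iSup_of_le (-n).toNat (by rw [hk])

end MonSepNet

theorem fork_join_lower_bound_general {K : Type*} (net : MonSepNet K)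
    (r : ℕ) (Y : ℤ → Fin r → ℝ) (ζ : ℤ → K)
    (hQ : ∀ n : ℤ, n ≤ 0 → ∀ j : Fin r,
      (∑ i ∈ Finset.Icc n 0, Y i j) ≤ net.Z n 0 (fun _ => 0) ζ)
    (T : ℤ → ℝ) (hT : Monotone T) :
    ∀ (j : Fin r) (n : ℤ), n ≤ 0 →
      (((∑ i ∈ Finset.Icc n 0, Y i j) - (T 0 - T n) : ℝ) : EReal) ≤
        ⨆ k : ℕ, ((net.Z (-(k : ℤ)) 0 T ζ : ℝ) : EReal) := by
  intro j n hn
  calc (((∑ i ∈ Finset.Icc n 0, Y i j) - (T 0 - T n) : ℝ) : EReal)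
      ≤ ((net.Z n 0 (fun _ => 0) ζ - (T 0 - T n) : ℝ) : EReal) := by
        exact_mod_cast sub_le_sub_right (hQ n hn j) _
    _ ≤ ((net.Z n 0 T ζ : ℝ) : EReal) := by exact_mod_cast net.Z_zero_sub_le hn hT ζ
    _ ≤ ⨆ k : ℕ, ((net.Z (-(k : ℤ)) 0 T ζ : ℝ) : EReal) := net.Z_le_iSup_Z hn T ζ

/-- **Fork-join lower bound** (Lemma 6): if nonnegative numbers `Y_i^{(j)}`, `1 ≤ j ≤ r`,
satisfy `Z_{[n,0]}(Q) ≥ max_j Σ_{i=n}^{0} Y_i^{(j)}` for all `n ≤ 0`, then for every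
arrival process `N` with `T_0 = 0`, the stationary maximal dater
`Z_{(-∞,0]}(N) = sup_n Z_{[-n,0]}(N)` (in the extended reals) dominates
`max_j sup_{n ≤ 0} (Σ_{i=n}^{0} Y_i^{(j)} - Σ_{i=n}^{-1} τ_i)`, the stationary response
time of the `r`-dimensional fork-join queue (here `Σ_{i=n}^{-1} τ_i = T_0 - T_n`). -/
theorem fork_join_lower_bound {K : Type*} (net : MonSepNet K)
    (r : ℕ) (hr : 1 ≤ r) (Y : ℤ → Fin r → ℝ) (hY : ∀ i j, 0 ≤ Y i j) (ζ : ℤ → K)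
    (hQ : ∀ n : ℤ, n ≤ 0 → ∀ j : Fin r,
      (∑ i ∈ Finset.Icc n 0, Y i j) ≤ net.Z n 0 (fun _ => 0) ζ)
    (T : ℤ → ℝ) (hT : Monotone T) (hT0 : T 0 = 0) :
    ∀ (j : Fin r) (n : ℤ), n ≤ 0 →
      (((∑ i ∈ Finset.Icc n 0, Y i j) - (T 0 - T n) : ℝ) : EReal) ≤
        ⨆ k : ℕ, ((net.Z (-(k : ℤ)) 0 T ζ : ℝ) : EReal) :=
  fork_join_lower_bound_general net r Y ζ hQ T hT
end
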